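/- arXiv:1901.07438 — 5 statements merged into one kernel-verified Lean document; each statement's English description precedes it below -/
import Mathlib

section
/- Hermite–Genocchi formula: for an n-times continuously differentiable function f : ℝ → ℝ and pairwise distinct points x_0,...,x_n, the divided difference satisfies [x_0,...,x_n; f] = ∫_{Σ_n} f^{(n)}(Σ_{j=0}^{n} s_j x_j) ds, where Σ_n = {(s_1,...,s_n) : s_j ≥ 0, Σ_{j=1}^{n} s_j ≤ 1} is the standard n-simplex, s_0 = 1 − Σ_{j=1}^{n} s_j, and ds is Lebesgue measure on Σ_n. -/
open MeasureTheory Finset Function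

/-- Newton divided difference `[x_0, ..., x_n; f]`, defined recursively. -/
noncomputable def divDiff (f : ℝ → ℝ) : (n : ℕ) → (Fin (n + 1) → ℝ) → ℝ
  | 0, x => f (x 0)
  | n + 1, x =>
      (divDiff f n (fun i => x i.succ) - divDiff f n (fun i => x i.castSucc)) /
        (x (Fin.last (n + 1)) - x 0)

/-!
Both sides obey the same recursion. In Lagrange form `∑ᵢ f xᵢ / ∏_{j ≠ i} (xᵢ - xⱼ)` the divided
difference depends only on the set of nodes, so the defining recursion may remove any two nodes, say
`x₀` and `x₁`. On the other side, slicing `Σ_{n+1}` along the weight of `x₁` turns each fibre into a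
segment in direction `x₁ - x₀`; integrating `f^{(n+1)}` over it by the fundamental theorem of
calculus leaves the two `n`-dimensional integrals for the nodes without `x₀` and without `x₁`,
divided by `x₁ - x₀`.
-/

theorem Lagrange.nodalWeight_erase {F ι : Type*} [Field F] [DecidableEq ι] {s : Finset ι}
    {v : ι → F} {i a : ι} (ha : a ∈ s) (hia : v i ≠ v a) :
    Lagrange.nodalWeight (s.erase a) v i = Lagrange.nodalWeight s v i * (v i - v a) := by
  have hai : a ∈ s.erase i := mem_erase.2 ⟨fun h => hia (h ▸ rfl), ha⟩
  rw [Lagrange.nodalWeight, Lagrange.nodalWeight, ← mul_prod_erase _ _ hai, erase_right_comm,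
    mul_right_comm, inv_mul_cancel₀ (sub_ne_zero.2 hia), one_mul]

/-- The divided difference of `f` on the nodes `s`, in the Lagrange form
`∑_{p ∈ s} f p / ∏_{q ∈ s \ {p}} (p - q)`. -/
noncomputable def divDiffFinset (f : ℝ → ℝ) (s : Finset ℝ) : ℝ :=
  ∑ p ∈ s, Lagrange.nodalWeight s id p * f p

theorem divDiffFinset_erase (f : ℝ → ℝ) {s : Finset ℝ} {a : ℝ} (ha : a ∈ s) :
    divDiffFinset f (s.erase a) = ∑ p ∈ s, Lagrange.nodalWeight s id p * (p - a) * f p := by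
  rw [divDiffFinset, ← sum_erase s (a := a)
    (f := fun p => Lagrange.nodalWeight s id p * (p - a) * f p) (by simp)]
  exact sum_congr rfl fun p hp => by rw [Lagrange.nodalWeight_erase ha (ne_of_mem_erase hp)]; rfl

theorem divDiffFinset_erase_sub_erase (f : ℝ → ℝ) {s : Finset ℝ} {a b : ℝ} (ha : a ∈ s)
    (hb : b ∈ s) :
    divDiffFinset f (s.erase a) - divDiffFinset f (s.erase b) = (b - a) * divDiffFinset f s := by
  rw [divDiffFinset_erase f ha, divDiffFinset_erase f hb, ← sum_sub_distrib, divDiffFinset,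
    mul_sum]
  exact sum_congr rfl fun p _ => by ring

theorem image_univ_comp_succAbove {n : ℕ} {x : Fin (n + 1) → ℝ} (hx : Injective x)
    (i : Fin (n + 1)) : univ.image (x ∘ i.succAbove) = (univ.image x).erase (x i) := by
  rw [← image_image, Fin.image_succAbove_univ, compl_singleton, image_erase hx]

theorem divDiff_eq_divDiffFinset (f : ℝ → ℝ) :
    ∀ {n : ℕ} {x : Fin (n + 1) → ℝ}, Injective x → divDiff f n x = divDiffFinset f (univ.image x)
  | 0, x, _ => by simp [divDiff, divDiffFinset, Lagrange.nodalWeight]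
  | n + 1, x, hx => by
    have hsucc : univ.image (fun i : Fin (n + 1) => x i.succ) = (univ.image x).erase (x 0) :=
      image_univ_comp_succAbove hx 0
    have hcastSucc : univ.image (fun i : Fin (n + 1) => x i.castSucc) =
        (univ.image x).erase (x (Fin.last _)) := by
      rw [← image_univ_comp_succAbove hx (Fin.last _), Fin.succAbove_last]; rfl
    rw [divDiff,
      divDiff_eq_divDiffFinset f (x := fun i => x i.succ) (hx.comp (Fin.succ_injective _)),
      divDiff_eq_divDiffFinset f (x := fun i => x i.castSucc) (hx.comp (Fin.castSucc_injective _)),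
      hsucc, hcastSucc, divDiffFinset_erase_sub_erase f (mem_image_of_mem x (mem_univ _))
        (mem_image_of_mem x (mem_univ _)),
      mul_div_cancel_left₀ _ (sub_ne_zero.2 (hx.ne Fin.last_pos.ne'))]

theorem divDiff_succ_eq_of_ne (f : ℝ → ℝ) {n : ℕ} {x : Fin (n + 2) → ℝ} (hx : Injective x)
    {i j : Fin (n + 2)} (hij : i ≠ j) :
    divDiff f (n + 1) x =
      (divDiff f n (x ∘ i.succAbove) - divDiff f n (x ∘ j.succAbove)) / (x j - x i) := by
  rw [divDiff_eq_divDiffFinset f hx,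
    divDiff_eq_divDiffFinset f (hx.comp (Fin.succAbove_right_injective (p := i))),
    divDiff_eq_divDiffFinset f (hx.comp (Fin.succAbove_right_injective (p := j))),
    image_univ_comp_succAbove hx, image_univ_comp_succAbove hx,
    divDiffFinset_erase_sub_erase f (mem_image_of_mem x (mem_univ _))
      (mem_image_of_mem x (mem_univ _)),
    mul_div_cancel_left₀ _ (sub_ne_zero.2 (hx.ne hij.symm))]

def cornerSimplex (n : ℕ) : Set (Fin n → ℝ) :=
  {s | (∀ j, 0 ≤ s j) ∧ ∑ j, s j ≤ 1}

theorem cornerSimplex_subset_Icc (n : ℕ) : cornerSimplex n ⊆ Set.Icc 0 1 :=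
  fun _ ⟨hs, hsum⟩ => ⟨hs, fun j => (single_le_sum (fun k _ => hs k) (mem_univ j)).trans hsum⟩

theorem isClosed_cornerSimplex (n : ℕ) : IsClosed (cornerSimplex n) := by
  rw [cornerSimplex, Set.ofPred_and, Set.ofPred_forall]
  exact (isClosed_iInter fun j => isClosed_le continuous_const (continuous_apply j)).inter
    (isClosed_le (continuous_finsetSum _ fun j _ => continuous_apply j) continuous_const)

theorem isCompact_cornerSimplex (n : ℕ) : IsCompact (cornerSimplex n) :=
  isCompact_Icc.of_isClosed_subset (isClosed_cornerSimplex n) (cornerSimplex_subset_Icc n)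

theorem cons_mem_cornerSimplex_iff {n : ℕ} {t : ℝ} {s : Fin n → ℝ} :
    Fin.cons t s ∈ cornerSimplex (n + 1) ↔
      s ∈ cornerSimplex n ∧ t ∈ Set.Icc 0 (1 - ∑ j, s j) := by
  simp only [cornerSimplex, Set.mem_ofPred_eq, Fin.forall_fin_succ, Fin.cons_zero, Fin.cons_succ,
    Fin.sum_cons, Set.mem_Icc]
  constructor
  · rintro ⟨⟨ht, hs⟩, hsum⟩
    exact ⟨⟨hs, by linarith⟩, ht, by linarith⟩
  · rintro ⟨⟨hs, -⟩, ht, hsum⟩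
    exact ⟨⟨ht, hs⟩, by linarith⟩

theorem setIntegral_cornerSimplex_zero {E : Type*} [NormedAddCommGroup E] [NormedSpace ℝ E]
    [CompleteSpace E] (g : (Fin 0 → ℝ) → E) : ∫ s in cornerSimplex 0, g s = g 0 := by
  have : cornerSimplex 0 = Set.univ := by ext s; simp [cornerSimplex]
  rw [this, Measure.restrict_univ, Measure.volume_pi_eq_dirac 0, integral_dirac]

theorem setIntegral_cornerSimplex_succ {E : Type*} [NormedAddCommGroup E] [NormedSpace ℝ E]
    [CompleteSpace E] {n : ℕ} {g : (Fin (n + 1) → ℝ) → E}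
    (hg : IntegrableOn g (cornerSimplex (n + 1))) :
    ∫ s in cornerSimplex (n + 1), g s =
      ∫ s in cornerSimplex n, ∫ t in Set.Icc 0 (1 - ∑ j, s j), g (Fin.cons t s) := by
  set e := MeasurableEquiv.piFinSuccAbove (fun _ : Fin (n + 1) => ℝ) 0
  have he : MeasurePreserving e.symm := (volume_preserving_piFinSuccAbove _ 0).symm
  have he_apply (p : ℝ × (Fin n → ℝ)) : e.symm p = Fin.cons p.1 p.2 := by
    simp [e, Fin.consEquiv]
  have hint : Integrable fun p : ℝ × (Fin n → ℝ) =>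
      (cornerSimplex (n + 1)).indicator g (Fin.cons p.1 p.2) := by
    simp_rw [← he_apply]
    exact (he.integrable_comp_emb e.symm.measurableEmbedding).2
      ((integrable_indicator_iff (isClosed_cornerSimplex _).measurableSet).2 hg)
  have hfiber (s : Fin n → ℝ) : ∫ t, (cornerSimplex (n + 1)).indicator g (Fin.cons t s) =
      (cornerSimplex n).indicator
        (fun s => ∫ t in Set.Icc 0 (1 - ∑ j, s j), g (Fin.cons t s)) s := by
    by_cases hs : s ∈ cornerSimplex n
    · rw [Set.indicator_of_mem hs, ← integral_indicator measurableSet_Icc]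
      congr 1 with t
      classical
      simp only [Set.indicator_apply, cons_mem_cornerSimplex_iff, hs, true_and]
    · simp [cons_mem_cornerSimplex_iff, hs]
  calc ∫ s in cornerSimplex (n + 1), g s
      = ∫ p : ℝ × (Fin n → ℝ), (cornerSimplex (n + 1)).indicator g (Fin.cons p.1 p.2) := by
        simp_rw [← he_apply, he.integral_comp',
          integral_indicator (isClosed_cornerSimplex _).measurableSet]
    _ = ∫ s, ∫ t, (cornerSimplex (n + 1)).indicator g (Fin.cons t s) := integral_prod_symm _ hint
    _ = _ := by
        simp_rw [hfiber]
        exact integral_indicator (isClosed_cornerSimplex _).measurableSet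

def baryPoint {n : ℕ} (x : Fin (n + 1) → ℝ) (s : Fin n → ℝ) : ℝ :=
  (1 - ∑ j, s j) * x 0 + ∑ j, s j * x j.succ

theorem continuous_baryPoint {n : ℕ} (x : Fin (n + 1) → ℝ) : Continuous (baryPoint x) := by
  unfold baryPoint
  fun_prop

theorem baryPoint_cons {n : ℕ} (x : Fin (n + 2) → ℝ) (t : ℝ) (s : Fin n → ℝ) :
    baryPoint x (Fin.cons t s) = (x 1 - x 0) * t + baryPoint (x ∘ Fin.succAbove 1) s := by
  simp only [baryPoint, Fin.sum_univ_succ, Fin.cons_zero, Fin.cons_succ, comp_apply,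
    Fin.one_succAbove_zero, Fin.one_succAbove_succ, Fin.succ_zero_eq_one]
  ring

theorem baryPoint_comp_succ {n : ℕ} (x : Fin (n + 2) → ℝ) (s : Fin n → ℝ) :
    baryPoint (x ∘ Fin.succ) s =
      (x 1 - x 0) * (1 - ∑ j, s j) + baryPoint (x ∘ Fin.succAbove 1) s := by
  simp only [baryPoint, comp_apply, Fin.one_succAbove_zero, Fin.one_succAbove_succ,
    Fin.succ_zero_eq_one]
  ring

theorem intervalIntegral_iteratedDeriv_succ_comp_mul_add {f : ℝ → ℝ} {n : ℕ}
    (hf : ContDiff ℝ (n + 1) f) {d : ℝ} (hd : d ≠ 0) (c L : ℝ) :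
    ∫ t in 0..L, iteratedDeriv (n + 1) f (d * t + c) =
      (iteratedDeriv n f (d * L + c) - iteratedDeriv n f c) / d := by
  have hdiff : Differentiable ℝ (iteratedDeriv n f) :=
    hf.differentiable_iteratedDeriv n (by norm_cast; omega)
  have hcont : Continuous (deriv (iteratedDeriv n f)) := by
    rw [← iteratedDeriv_succ]
    exact hf.continuous_iteratedDeriv (n + 1) (by norm_cast)
  rw [intervalIntegral.integral_comp_mul_add _ hd, mul_zero, zero_add, iteratedDeriv_succ,
    intervalIntegral.integral_deriv_eq_sub (fun y _ => hdiff y) (hcont.intervalIntegrable _ _),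
    smul_eq_mul, inv_mul_eq_div]

theorem setIntegral_iteratedDeriv_baryPoint_succ {f : ℝ → ℝ} {n : ℕ}
    (hf : ContDiff ℝ (n + 1) f) {x : Fin (n + 2) → ℝ} (hx : x 1 ≠ x 0) :
    ∫ s in cornerSimplex (n + 1), iteratedDeriv (n + 1) f (baryPoint x s) =
      ((∫ s in cornerSimplex n, iteratedDeriv n f (baryPoint (x ∘ Fin.succ) s)) -
        ∫ s in cornerSimplex n, iteratedDeriv n f (baryPoint (x ∘ Fin.succAbove 1) s)) /
          (x 1 - x 0) := by
  have hint {m k : ℕ} (hk : k ≤ n + 1) (y : Fin (m + 1) → ℝ) :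
      IntegrableOn (fun s => iteratedDeriv k f (baryPoint y s)) (cornerSimplex m) :=
    ((hf.continuous_iteratedDeriv k (by exact_mod_cast hk)).comp
      (continuous_baryPoint y)).continuousOn.integrableOn_compact (isCompact_cornerSimplex m)
  rw [setIntegral_cornerSimplex_succ (hint le_rfl x),
    ← integral_sub (hint n.le_succ (x ∘ Fin.succ)) (hint n.le_succ (x ∘ Fin.succAbove 1)),
    ← integral_div]
  refine setIntegral_congr_fun (isClosed_cornerSimplex n).measurableSet fun s hs => ?_
  simp only [baryPoint_cons, baryPoint_comp_succ]
  rw [integral_Icc_eq_integral_Ioc, ← intervalIntegral.integral_of_le (sub_nonneg.2 hs.2),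
    intervalIntegral_iteratedDeriv_succ_comp_mul_add hf (sub_ne_zero.2 hx)]

/-- Hermite–Genocchi formula: for an `n`-times continuously differentiable
`f : ℝ → ℝ` and pairwise distinct points `x_0, ..., x_n`,
`[x_0,...,x_n; f] = ∫_{Σ_n} f^{(n)}(Σ_j s_j x_j) ds`, where
`Σ_n = {(s_1,...,s_n) : s_j ≥ 0, Σ s_j ≤ 1}` and `s_0 = 1 − Σ_{j=1}^n s_j`. -/
theorem hermite_genocchi (n : ℕ) (f : ℝ → ℝ) (hf : ContDiff ℝ n f)
    (x : Fin (n + 1) → ℝ) (hx : Function.Injective x) :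
    divDiff f n x =
      ∫ s in {s : Fin n → ℝ | (∀ j, 0 ≤ s j) ∧ ∑ j, s j ≤ 1},
        iteratedDeriv n f ((1 - ∑ j, s j) * x 0 + ∑ j : Fin n, s j * x j.succ) := by
  change divDiff f n x = ∫ s in cornerSimplex n, iteratedDeriv n f (baryPoint x s)
  induction n with
  | zero =>
    rw [setIntegral_cornerSimplex_zero]
    simp [baryPoint, divDiff]
  | succ n ih =>
    have h01 : (0 : Fin (n + 2)) ≠ 1 := Fin.zero_ne_one
    have hf' : ContDiff ℝ (n + 1) f := by exact_mod_cast hf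
    rw [setIntegral_iteratedDeriv_baryPoint_succ hf' (hx.ne h01.symm),
      divDiff_succ_eq_of_ne f hx h01, Fin.succAbove_zero,
      ih hf'.of_succ _ (hx.comp (Fin.succ_injective _)),
      ih hf'.of_succ _ (hx.comp (Fin.succAbove_right_injective (p := 1)))]
end

section
/- Duhamel's formula for derivations: let A be a unital complex Banach algebra, δ : A → A a continuous derivation (δ(xy) = δ(x)y + xδ(y)), a ∈ A, and z ∈ ℂ. Then δ(exp(za)) = z ∫_0^1 exp(zsa) δ(a) exp(z(1−s)a) ds. -/
/-!
With `b = z • a`, the function `F s = exp (s • b) * δ (exp ((1 - s) • b))` goes from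
`F 0 = δ (exp b)` to `F 1 = exp b * δ 1 = 0`. Since `b` commutes with its exponentials, the
Leibniz rule gives `F' s = -exp (s • b) * δ b * exp ((1 - s) • b)`, and the fundamental
theorem of calculus yields the formula.
-/

open NormedSpace intervalIntegral

theorem map_one_eq_zero_of_leibniz {R : Type*} [NonAssocRing R] {δ : R → R}
    (hδ : ∀ x y : R, δ (x * y) = δ x * y + x * δ y) : δ 1 = 0 := by
  simpa using hδ 1 1

theorem HasDerivAt.comp_ofReal' {E : Type*} [NormedAddCommGroup E] [NormedSpace ℂ E]
    {e : ℂ → E} {e' : E} {x : ℝ} (hf : HasDerivAt e e' x) :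
    HasDerivAt (fun y : ℝ => e y) e' x := by
  simpa [Function.comp_def] using hf.scomp x Complex.ofRealCLM.hasDerivAt

section
variable {𝕂 A : Type*} [RCLike 𝕂] [NormedRing A] [NormedAlgebra 𝕂 A] [CompleteSpace A]

@[fun_prop]
theorem Continuous.exp_smul {X : Type*} [TopologicalSpace X] {f : X → 𝕂} (hf : Continuous f)
    (b : A) : Continuous fun x => exp (f x • b) :=
  (continuous_iff_continuousAt.2 fun t => (hasDerivAt_exp_smul_const b t).continuousAt).comp hf

theorem hasDerivAt_exp_smul_mul_map_exp_one_sub_smul (δ : A →L[𝕂] A)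
    (hδ : ∀ x y : A, δ (x * y) = δ x * y + x * δ y) (b : A) (t : 𝕂) :
    HasDerivAt (fun u : 𝕂 => exp (u • b) * δ (exp ((1 - u) • b)))
      (-(exp (t • b) * δ b * exp ((1 - t) • b))) t := by
  have hG : HasDerivAt (fun u : 𝕂 => exp ((1 - u) • b)) (-(b * exp ((1 - t) • b))) t := by
    simpa [Function.comp_def] using
      (hasDerivAt_exp_smul_const' b (1 - t)).scomp t ((hasDerivAt_id t).const_sub 1)
  have hδG : HasDerivAt (fun u : 𝕂 => δ (exp ((1 - u) • b))) (δ (-(b * exp ((1 - t) • b)))) t :=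
    δ.hasFDerivAt.comp_hasDerivAt t hG
  convert (hasDerivAt_exp_smul_const b t).fun_mul hδG using 1
  simp only [map_neg, hδ, mul_neg, mul_add, neg_add, mul_assoc]
  abel

end

/-- Duhamel's formula for derivations on a unital complex Banach algebra:
`δ(exp(za)) = z ∫_0^1 exp(zsa) δ(a) exp(z(1−s)a) ds`. -/
theorem duhamel_derivation {A : Type*} [NormedRing A] [NormedAlgebra ℂ A]
    [CompleteSpace A] (δ : A →L[ℂ] A)
    (hδ : ∀ x y : A, δ (x * y) = δ x * y + x * δ y) (a : A) (z : ℂ) :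
    δ (exp (z • a)) =
      z • ∫ s in (0:ℝ)..1,
        exp ((z * (s : ℂ)) • a) * δ a * exp ((z * (1 - (s : ℂ))) • a) := by
  have hsmul (w : ℂ) : (z * w) • a = w • z • a := by rw [mul_comm, mul_smul]
  have hFTC := integral_eq_sub_of_hasDerivAt (a := 0) (b := 1)
    (fun (s : ℝ) _ => (hasDerivAt_exp_smul_mul_map_exp_one_sub_smul δ hδ (z • a) s).comp_ofReal')
    ((by fun_prop : Continuous fun s : ℝ =>
      -(exp ((s : ℂ) • z • a) * δ (z • a) * exp ((1 - (s : ℂ)) • z • a))).intervalIntegrable 0 1)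
  simp only [hsmul, integral_neg, map_smul, mul_smul_comm, smul_mul_assoc, integral_smul] at hFTC ⊢
  simpa [map_one_eq_zero_of_leibniz hδ] using hFTC.symm
end

section
/- For real s_1, s_2 with s_1 ≠ 0, s_2 ≠ 0, s_1 + s_2 ≠ 0: ∫_0^1 r e^{s_1 r} · (e^{r s_2} − 1)/(r s_2) dr = (e^{s_1}((e^{s_2} − 1)s_1 − s_2) + s_2)/(s_1 s_2 (s_1 + s_2)). -/
open Real intervalIntegral

lemma exp_mul_integral (c : ℝ) (hc : c ≠ 0) :
    ∫ r in (0:ℝ)..1, exp (c * r) = (exp c - 1) / c := by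
  have : ∀ r ∈ Set.uIcc (0:ℝ) 1, HasDerivAt (fun x => exp (c * x) / c) (exp (c * r)) r := by
    intro r _
    have h := ((hasDerivAt_id r).const_mul c).exp
    simpa [mul_comm, mul_div_assoc, mul_div_cancel_left₀ _ hc] using h.div_const c
  rw [intervalIntegral.integral_eq_sub_of_hasDerivAt this
    (by apply Continuous.intervalIntegrable; continuity)]
  simp [sub_div]

/-- Closed form of the auxiliary function `G₂(s₁,s₂)` appearing in the functional
relations for the `a₄` heat coefficient of the noncommutative two torus:
`∫_0^1 r e^{s₁ r} (e^{r s₂} − 1)/(r s₂) dr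
  = (e^{s₁}((e^{s₂} − 1)s₁ − s₂) + s₂)/(s₁ s₂ (s₁ + s₂))`. -/
theorem G2_closed_form (s₁ s₂ : ℝ) (h1 : s₁ ≠ 0) (h2 : s₂ ≠ 0) (h12 : s₁ + s₂ ≠ 0) :
    ∫ r in (0:ℝ)..1, r * exp (s₁ * r) * ((exp (r * s₂) - 1) / (r * s₂)) =
      (exp s₁ * ((exp s₂ - 1) * s₁ - s₂) + s₂) / (s₁ * s₂ * (s₁ + s₂)) := by
  have key : ∀ r : ℝ, r * exp (s₁ * r) * ((exp (r * s₂) - 1) / (r * s₂)) =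
      exp ((s₁ + s₂) * r) / s₂ - exp (s₁ * r) / s₂ := by
    intro r
    rcases eq_or_ne r 0 with rfl | hr
    · simp
    · rw [show (s₁+s₂)*r = s₁*r + r*s₂ by ring, Real.exp_add]
      field_simp
  simp_rw [key]
  rw [intervalIntegral.integral_sub, intervalIntegral.integral_div,
    intervalIntegral.integral_div, exp_mul_integral _ h12, exp_mul_integral _ h1]
  · rw [Real.exp_add]
    field_simp
    ring
  · exact (Continuous.intervalIntegrable (by continuity) _ _)
  · exact (Continuous.intervalIntegrable (by continuity) _ _)
end

section
/- For fixed x, y > 0 with x ≠ y, the function d ↦ K_d^t(x,y) (defined for d ≠ 0, 2) satisfies lim_{d→2} K_d^t(x,y) = K_2^t(x,y), where K_2^t(x,y) = −(√x √y/(x−y)^3)((x+y) log(x/y) + 2(y−x)). -/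
open Real Filter

/-- The two-variable curvature function `K_d^t` of the `d`-dimensional
noncommutative torus with conformally flat functional metric, for `f(t) = t`. -/
noncomputable def Kdt (d x y : ℝ) : ℝ :=
  4 * x ^ (2 - 3 * d / 4) * y ^ (2 - 3 * d / 4) / (d * (d - 2) * (x - y) ^ 3) *
    ((d - 1) * x ^ (d / 2) * y ^ (d / 2 - 1) - (d - 1) * x ^ (d / 2 - 1) * y ^ (d / 2) -
      x ^ (d - 1) + y ^ (d - 1))

/-- The two-dimensional curvature function
`K_2^t(x,y) = −(√x √y/(x−y)³)((x+y)log(x/y) + 2(y−x))`. -/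
noncomputable def K2t (x y : ℝ) : ℝ :=
  -(Real.sqrt x * Real.sqrt y / (x - y) ^ 3) * ((x + y) * log (x / y) + 2 * (y - x))

/-!
Write `K_d^t = P(d) N(d) / (d - 2)` with the prefactor `P` continuous at `d = 2` and the
numerator `N` vanishing there. The limit is then `P(2) N'(2)`, and differentiating the powers
`x ^ (d / 2)`, ... in the exponent `d` is what produces the logarithms of `K_2^t`.
-/

open Topology

theorem ContinuousAt.tendsto_mul_div_sub_of_hasDerivAt {g N : ℝ → ℝ} {a N' : ℝ}
    (hg : ContinuousAt g a) (hN : HasDerivAt N N' a) (hNa : N a = 0) :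
    Tendsto (fun d => g d * N d / (d - a)) (𝓝[≠] a) (𝓝 (g a * N')) := by
  have hslope := hasDerivAt_iff_tendsto_slope.mp hN
  refine (hg.continuousWithinAt.tendsto.mul hslope).congr fun d => ?_
  rw [slope_def_field, hNa, sub_zero, mul_div_assoc]

noncomputable def curvaturePrefactor (x y d : ℝ) : ℝ :=
  4 / (x - y) ^ 3 * x ^ (2 - 3 * d / 4) * y ^ (2 - 3 * d / 4) / d

noncomputable def curvatureNumerator (x y d : ℝ) : ℝ :=
  (d - 1) * x ^ (d / 2) * y ^ (d / 2 - 1) - (d - 1) * x ^ (d / 2 - 1) * y ^ (d / 2) -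
    x ^ (d - 1) + y ^ (d - 1)

theorem Kdt_eq_curvaturePrefactor_mul_curvatureNumerator (d x y : ℝ) :
    Kdt d x y = curvaturePrefactor x y d * curvatureNumerator x y d / (d - 2) := by
  simp only [Kdt, curvaturePrefactor, curvatureNumerator, div_eq_mul_inv, mul_inv]
  ring

theorem continuousAt_curvaturePrefactor {x y d : ℝ} (hx : x ≠ 0) (hy : y ≠ 0) (hd : d ≠ 0) :
    ContinuousAt (curvaturePrefactor x y) d := by
  refine ContinuousAt.div ?_ continuousAt_id hd
  exact ((continuousAt_const_rpow hx).comp (by fun_prop)).const_mul _ |>.mul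
    ((continuousAt_const_rpow hy).comp (by fun_prop))

theorem curvatureNumerator_two (x y : ℝ) : curvatureNumerator x y 2 = 0 := by
  norm_num [curvatureNumerator]

theorem hasDerivAt_curvatureNumerator {x y : ℝ} (hx : 0 < x) (hy : 0 < y) :
    HasDerivAt (curvatureNumerator x y) (x - y - (x + y) * (log x - log y) / 2) 2 := by
  have hid : HasDerivAt (fun d : ℝ => d) 1 2 := hasDerivAt_id 2
  have hhalf : HasDerivAt (fun d : ℝ => d / 2) (1 / 2) 2 := hid.div_const 2
  have hpred : HasDerivAt (fun d : ℝ => d - 1) 1 2 := hid.sub_const 1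
  have hhalfPred : HasDerivAt (fun d : ℝ => d / 2 - 1) (1 / 2) 2 := hhalf.sub_const 1
  have h := (((hpred.mul (hhalf.const_rpow hx)).mul (hhalfPred.const_rpow hy)).sub
    ((hpred.mul (hhalfPred.const_rpow hx)).mul (hhalf.const_rpow hy))).sub
    (hpred.const_rpow hx) |>.add (hpred.const_rpow hy)
  refine h.congr_deriv ?_
  norm_num
  ring

theorem K2t_eq_curvaturePrefactor_mul {x y : ℝ} (hx : 0 < x) (hy : 0 < y) :
    K2t x y = curvaturePrefactor x y 2 * (x - y - (x + y) * (log x - log y) / 2) := by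
  rw [K2t, curvaturePrefactor, log_div hx.ne' hy.ne', sqrt_eq_rpow, sqrt_eq_rpow]
  norm_num
  ring

theorem Kdt_tendsto_K2t_general (x y : ℝ) (hx : 0 < x) (hy : 0 < y) :
    Tendsto (fun d : ℝ => Kdt d x y) (nhdsWithin 2 {(2 : ℝ)}ᶜ) (nhds (K2t x y)) := by
  simp only [Kdt_eq_curvaturePrefactor_mul_curvatureNumerator,
    K2t_eq_curvaturePrefactor_mul hx hy]
  have hprefactor := continuousAt_curvaturePrefactor hx.ne' hy.ne' two_ne_zero
  exact hprefactor.tendsto_mul_div_sub_of_hasDerivAt (hasDerivAt_curvatureNumerator hx hy)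
    (curvatureNumerator_two x y)

/-- For fixed `x ≠ y` positive, `K_d^t(x,y) → K_2^t(x,y)` as `d → 2`. -/
theorem Kdt_tendsto_K2t (x y : ℝ) (hx : 0 < x) (hy : 0 < y) (hxy : x ≠ y) :
    Tendsto (fun d : ℝ => Kdt d x y) (nhdsWithin 2 {(2 : ℝ)}ᶜ) (nhds (K2t x y)) :=
  Kdt_tendsto_K2t_general x y hx hy
end

section
/- Karamata-type Weyl law: let (λ_n)_{n≥1} be a nondecreasing sequence of positive reals tending to infinity such that Σ_{n} e^{−t λ_n} converges for all t > 0 and t^{m/2} Σ_n e^{−t λ_n} → C as t → 0+, for some constants C > 0 and m > 0. Then the counting function N(λ) = #{n : λ_n ≤ λ} satisfies N(λ)/λ^{m/2} → C/Γ(m/2 + 1) as λ → ∞. -/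
/-!
Karamata's method. Rescaling `t` by `k + 1` in the hypothesis gives
`t^s ∑ₙ (e^{-tλₙ})^{k+1} → C (k+1)^{-s} = (C / Γ(s)) ∫₀^∞ e^{-(k+1)x} x^{s-1} dx`, hence
`t^s ∑ₙ g(e^{-tλₙ}) → (C / Γ(s)) ∫₀^∞ g(e^{-x}) x^{s-1} dx` for every `g(u) = u P(u)` with `P` a
polynomial. The quantity `t^s N(1/t)` is the left side for `g = 1_{[e⁻¹, 1]}`, whose right side is
`C / (s Γ(s)) = C / Γ(s + 1)`. Weierstrass approximation of a continuous function equal to `1 / u`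
on `[e⁻¹, 1]` and vanishing near `0` squeezes this indicator between functions `u P(u)` whose
integrals are arbitrarily close to `1 / s`.
-/

open Real Filter Set MeasureTheory Topology Polynomial

namespace KaramataWeyl

/-- For `0 < p < q`: equal to `1 / u` on `[q, ∞)` and to `0` on `(-∞, p]`, continuous. -/
noncomputable def cutoff (p q u : ℝ) : ℝ := min 1 (max 0 ((u - p) / (q - p))) / max u p

lemma continuous_cutoff {p q : ℝ} (hp : 0 < p) : Continuous (cutoff p q) :=
  Continuous.div (by fun_prop) (by fun_prop) fun u => (hp.trans_le (le_max_right u p)).ne'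

lemma indicator_Ici_le_mul_cutoff {p q u : ℝ} (hp : 0 < p) (hpq : p < q) (hu : 0 ≤ u) :
    (Ici q).indicator 1 u ≤ u * cutoff p q u := by
  by_cases huq : q ≤ u
  · have hup : max u p = u := max_eq_left (hpq.le.trans huq)
    have hramp : 1 ≤ (u - p) / (q - p) := by rw [le_div_iff₀ (by linarith)]; linarith
    rw [indicator_of_mem (mem_Ici.2 huq), cutoff, hup, max_eq_right (by linarith),
      min_eq_left hramp, mul_one_div_cancel (by linarith), Pi.one_apply]
  · rw [indicator_of_notMem (by simpa using huq)]
    exact mul_nonneg hu (div_nonneg (by positivity) (le_max_of_le_left hu))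

lemma mul_cutoff_le_indicator_Ici {p q u : ℝ} (hp : 0 < p) (hpq : p < q) :
    u * cutoff p q u ≤ (Ici p).indicator 1 u := by
  by_cases hpu : p ≤ u
  · rw [indicator_of_mem (mem_Ici.2 hpu), cutoff, max_eq_left hpu,
      mul_div_cancel₀ _ (hp.trans_le hpu).ne']
    exact min_le_left _ _
  · have hramp : (u - p) / (q - p) ≤ 0 := div_nonpos_of_nonpos_of_nonneg (by linarith) (by linarith)
    rw [indicator_of_notMem (by simpa using hpu), cutoff, max_eq_left hramp,
      min_eq_right zero_le_one, zero_div, mul_zero]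

lemma indicator_Ici_exp_neg (b y : ℝ) :
    (Ici (exp (-b))).indicator (1 : ℝ → ℝ) (exp (-y)) = (Iic b).indicator 1 y := by
  simp [indicator_apply]

lemma exists_polynomial_le_le_add {f : ℝ → ℝ} {a b η : ℝ} (hf : ContinuousOn f (Icc a b))
    (hη : 0 < η) : ∃ P : ℝ[X], ∀ x ∈ Icc a b, f x ≤ P.eval x ∧ P.eval x ≤ f x + η := by
  obtain ⟨P, hP⟩ := exists_polynomial_near_of_continuousOn a b f hf (η / 2) (half_pos hη)
  refine ⟨P + C (η / 2), fun x hx => ?_⟩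
  have := abs_lt.1 (hP x hx)
  simp only [eval_add, eval_C]
  constructor <;> linarith

lemma exp_neg_mem_Icc {y : ℝ} (hy : 0 ≤ y) : exp (-y) ∈ Icc (0 : ℝ) 1 :=
  ⟨(exp_pos _).le, exp_le_one_iff.2 (neg_nonpos.2 hy)⟩

lemma exists_polynomial_upper_approx_indicator {a b c : ℝ} (hba : b < a) (hc : 0 < c) :
    ∃ P : ℝ[X], ∀ y, 0 ≤ y → (Iic b).indicator 1 y ≤ exp (-y) * P.eval (exp (-y)) ∧
      exp (-y) * P.eval (exp (-y)) ≤ (Iic a).indicator 1 y + c * exp (-y) := by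
  have hpq : exp (-a) < exp (-b) := exp_lt_exp.2 (neg_lt_neg hba)
  obtain ⟨P, hP⟩ := exists_polynomial_le_le_add
    (continuous_cutoff (q := exp (-b)) (exp_pos (-a))).continuousOn hc
  refine ⟨P, fun y hy => ?_⟩
  obtain ⟨hlo, hhi⟩ := hP _ (exp_neg_mem_Icc hy)
  have hu := (exp_pos (-y)).le
  rw [← indicator_Ici_exp_neg, ← indicator_Ici_exp_neg]
  constructor
  · exact (indicator_Ici_le_mul_cutoff (exp_pos _) hpq hu).trans
      (mul_le_mul_of_nonneg_left hlo hu)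
  · calc exp (-y) * P.eval (exp (-y)) ≤ exp (-y) * (cutoff (exp (-a)) (exp (-b)) (exp (-y)) + c) :=
          mul_le_mul_of_nonneg_left hhi hu
      _ ≤ (Ici (exp (-a))).indicator 1 (exp (-y)) + c * exp (-y) := by
          rw [mul_add, mul_comm _ c]
          gcongr
          exact mul_cutoff_le_indicator_Ici (exp_pos _) hpq

lemma exists_polynomial_lower_approx_indicator {a b c : ℝ} (hba : b < a) (hc : c < 0) :
    ∃ P : ℝ[X], ∀ y, 0 ≤ y → (Iic b).indicator 1 y + c * exp (-y) ≤ exp (-y) * P.eval (exp (-y)) ∧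
      exp (-y) * P.eval (exp (-y)) ≤ (Iic a).indicator 1 y := by
  have hpq : exp (-a) < exp (-b) := exp_lt_exp.2 (neg_lt_neg hba)
  obtain ⟨P, hP⟩ := exists_polynomial_le_le_add (f := fun u => cutoff (exp (-a)) (exp (-b)) u + c)
    ((continuous_cutoff (exp_pos _)).add continuous_const).continuousOn (neg_pos.2 hc)
  refine ⟨P, fun y hy => ?_⟩
  obtain ⟨hlo, hhi⟩ := hP _ (exp_neg_mem_Icc hy)
  rw [add_neg_cancel_right] at hhi
  have hu := (exp_pos (-y)).le
  rw [← indicator_Ici_exp_neg, ← indicator_Ici_exp_neg]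
  constructor
  · calc (Ici (exp (-b))).indicator 1 (exp (-y)) + c * exp (-y)
          ≤ exp (-y) * (cutoff (exp (-a)) (exp (-b)) (exp (-y)) + c) := by
          rw [mul_add, mul_comm _ c]
          gcongr
          exact indicator_Ici_le_mul_cutoff (exp_pos _) hpq hu
      _ ≤ exp (-y) * P.eval (exp (-y)) := mul_le_mul_of_nonneg_left hlo hu
  · exact (mul_le_mul_of_nonneg_left hhi hu).trans (mul_cutoff_le_indicator_Ici (exp_pos _) hpq)

section Integrals

variable {s : ℝ}

lemma indicator_Iic_add_mul_exp_mul_rpow (a c : ℝ) :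
    (fun x => ((Iic a).indicator 1 x + c * exp (-x)) * x ^ (s - 1)) =
      (Iic a).indicator (fun x => x ^ (s - 1)) + fun x => c * (exp (-x) * x ^ (s - 1)) := by
  ext x
  by_cases hx : x ∈ Iic a <;> simp [hx] <;> ring

lemma integrableOn_indicator_Iic_rpow (hs : 0 < s) (a : ℝ) :
    IntegrableOn ((Iic a).indicator fun x => x ^ (s - 1)) (Ioi 0) := by
  rw [IntegrableOn, integrable_indicator_iff measurableSet_Iic, IntegrableOn,
    Measure.restrict_restrict measurableSet_Iic, inter_comm, Ioi_inter_Iic]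
  rcases le_total a 0 with ha | ha
  · simp [Ioc_eq_empty_of_le ha]
  · exact (intervalIntegrable_iff_integrableOn_Ioc_of_le ha).1
      (intervalIntegral.intervalIntegrable_rpow' (by linarith))

lemma integrableOn_indicator_Iic_add_mul_exp (hs : 0 < s) (a c : ℝ) :
    IntegrableOn (fun x => ((Iic a).indicator 1 x + c * exp (-x)) * x ^ (s - 1)) (Ioi 0) := by
  rw [indicator_Iic_add_mul_exp_mul_rpow]
  exact (integrableOn_indicator_Iic_rpow hs a).add ((GammaIntegral_convergent hs).const_mul c)

lemma integral_indicator_Iic_add_mul_exp (hs : 0 < s) {a : ℝ} (ha : 0 ≤ a) (c : ℝ) :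
    ∫ x in Ioi 0, ((Iic a).indicator 1 x + c * exp (-x)) * x ^ (s - 1) =
      a ^ s / s + c * Gamma s := by
  rw [indicator_Iic_add_mul_exp_mul_rpow, integral_add' (integrableOn_indicator_Iic_rpow hs a)
    ((GammaIntegral_convergent hs).const_mul c), setIntegral_indicator measurableSet_Iic,
    Ioi_inter_Iic, ← intervalIntegral.integral_of_le ha, integral_rpow (Or.inl (by linarith)),
    integral_const_mul, ← Gamma_eq_integral hs, sub_add_cancel, zero_rpow hs.ne', sub_zero]

lemma exp_neg_pow_mul_rpow (k : ℕ) (x : ℝ) :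
    exp (-x) ^ (k + 1) * x ^ (s - 1) = x ^ (s - 1) * exp (-((k + 1 : ℝ) * x)) := by
  rw [← exp_nat_mul, mul_comm]
  push_cast
  ring_nf

lemma integrableOn_exp_neg_pow_mul_rpow (hs : 0 < s) (k : ℕ) :
    IntegrableOn (fun x => exp (-x) ^ (k + 1) * x ^ (s - 1)) (Ioi 0) := by
  simp_rw [exp_neg_pow_mul_rpow]
  simpa only [rpow_one, neg_mul] using integrableOn_rpow_mul_exp_neg_mul_rpow
    (show -1 < s - 1 by linarith) one_pos (by positivity : (0 : ℝ) < k + 1)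

lemma integral_exp_neg_pow_mul_rpow (hs : 0 < s) (k : ℕ) :
    ∫ x in Ioi 0, exp (-x) ^ (k + 1) * x ^ (s - 1) = Gamma s * ((k : ℝ) + 1) ^ (-s) := by
  have hk : (0 : ℝ) < k + 1 := by positivity
  simp_rw [exp_neg_pow_mul_rpow]
  rw [integral_rpow_mul_exp_neg_mul_Ioi hs hk, one_div, inv_rpow hk.le, rpow_neg hk.le, mul_comm]

lemma mul_eval_eq_sum (P : ℝ[X]) (u : ℝ) :
    u * P.eval u = ∑ k ∈ P.support, P.coeff k * u ^ (k + 1) := by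
  rw [eval_eq_sum, Polynomial.sum_def, Finset.mul_sum]
  exact Finset.sum_congr rfl fun k _ => by ring

lemma exp_neg_mul_eval_mul_rpow (P : ℝ[X]) (x : ℝ) :
    exp (-x) * P.eval (exp (-x)) * x ^ (s - 1) =
      ∑ k ∈ P.support, P.coeff k * (exp (-x) ^ (k + 1) * x ^ (s - 1)) := by
  rw [mul_eval_eq_sum, Finset.sum_mul]
  exact Finset.sum_congr rfl fun k _ => mul_assoc _ _ _

lemma integrableOn_exp_neg_mul_eval (hs : 0 < s) (P : ℝ[X]) :
    IntegrableOn (fun x => exp (-x) * P.eval (exp (-x)) * x ^ (s - 1)) (Ioi 0) := by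
  simp_rw [exp_neg_mul_eval_mul_rpow]
  exact integrable_finsetSum _ fun k _ => (integrableOn_exp_neg_pow_mul_rpow hs k).const_mul _

lemma integral_exp_neg_mul_eval (hs : 0 < s) (P : ℝ[X]) :
    ∫ x in Ioi 0, exp (-x) * P.eval (exp (-x)) * x ^ (s - 1) =
      Gamma s * ∑ k ∈ P.support, P.coeff k * ((k : ℝ) + 1) ^ (-s) := by
  simp_rw [exp_neg_mul_eval_mul_rpow]
  rw [integral_finsetSum _ fun k _ => (integrableOn_exp_neg_pow_mul_rpow hs k).const_mul _,
    Finset.mul_sum]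
  refine Finset.sum_congr rfl fun k _ => ?_
  rw [integral_const_mul, integral_exp_neg_pow_mul_rpow hs]
  ring

end Integrals

section HeatTrace

variable {lam : ℕ → ℝ} {s C : ℝ}

lemma exp_neg_mul_pow (t x : ℝ) (k : ℕ) : exp (-t * x) ^ (k + 1) = exp (-((k + 1) * t) * x) := by
  rw [← exp_nat_mul]
  push_cast
  ring_nf

lemma summable_exp_neg_mul_pow (hsum : ∀ t : ℝ, 0 < t → Summable fun n => exp (-t * lam n))
    {t : ℝ} (ht : 0 < t) (k : ℕ) : Summable fun n => exp (-t * lam n) ^ (k + 1) := by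
  simpa only [exp_neg_mul_pow] using hsum _ (by positivity)

lemma tendsto_rpow_mul_tsum_exp_neg_mul_pow
    (hheat : Tendsto (fun t : ℝ => t ^ s * ∑' n, exp (-t * lam n)) (𝓝[>] 0) (𝓝 C)) (k : ℕ) :
    Tendsto (fun t : ℝ => t ^ s * ∑' n, exp (-t * lam n) ^ (k + 1)) (𝓝[>] 0)
      (𝓝 (C * ((k : ℝ) + 1) ^ (-s))) := by
  have hk : (0 : ℝ) < k + 1 := by positivity
  have hscale : Tendsto (fun t : ℝ => (k + 1) * t) (𝓝[>] 0) (𝓝[>] 0) :=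
    tendsto_comap.mono_left (comap_mulLeft_nhdsGT_zero hk).ge
  refine ((hheat.comp hscale).mul_const (((k : ℝ) + 1) ^ (-s))).congr' ?_
  filter_upwards [self_mem_nhdsWithin] with t ht
  simp only [Function.comp_apply, exp_neg_mul_pow]
  rw [mul_rpow hk.le (le_of_lt ht), rpow_neg hk.le]
  field_simp

lemma summable_exp_neg_mul_eval (hsum : ∀ t : ℝ, 0 < t → Summable fun n => exp (-t * lam n))
    (P : ℝ[X]) {t : ℝ} (ht : 0 < t) :
    Summable fun n => exp (-t * lam n) * P.eval (exp (-t * lam n)) := by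
  simp_rw [mul_eval_eq_sum]
  exact summable_sum fun k _ => (summable_exp_neg_mul_pow hsum ht k).mul_left _

theorem tendsto_rpow_mul_tsum_exp_neg_mul_eval (hs : 0 < s)
    (hsum : ∀ t : ℝ, 0 < t → Summable fun n => exp (-t * lam n))
    (hheat : Tendsto (fun t : ℝ => t ^ s * ∑' n, exp (-t * lam n)) (𝓝[>] 0) (𝓝 C))
    (P : ℝ[X]) :
    Tendsto (fun t : ℝ => t ^ s * ∑' n, exp (-t * lam n) * P.eval (exp (-t * lam n))) (𝓝[>] 0)
      (𝓝 (C / Gamma s * ∫ x in Ioi 0, exp (-x) * P.eval (exp (-x)) * x ^ (s - 1))) := by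
  have hvalue : C / Gamma s * ∫ x in Ioi 0, exp (-x) * P.eval (exp (-x)) * x ^ (s - 1) =
      ∑ k ∈ P.support, P.coeff k * (C * ((k : ℝ) + 1) ^ (-s)) := by
    rw [integral_exp_neg_mul_eval hs, ← mul_assoc, div_mul_cancel₀ _ (Gamma_pos_of_pos hs).ne',
      Finset.mul_sum]
    exact Finset.sum_congr rfl fun k _ => by ring
  rw [hvalue]
  refine (tendsto_finsetSum P.support fun k _ =>
    (tendsto_rpow_mul_tsum_exp_neg_mul_pow hheat k).const_mul (P.coeff k)).congr' ?_
  filter_upwards [self_mem_nhdsWithin] with t ht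
  simp_rw [mul_eval_eq_sum]
  rw [Summable.tsum_finsetSum fun k _ => (summable_exp_neg_mul_pow hsum ht k).mul_left _,
    Finset.mul_sum]
  refine Finset.sum_congr rfl fun k _ => ?_
  rw [tsum_mul_left, mul_left_comm]

end HeatTrace

section Counting

variable {α : Type*}

lemma natCard_eq_tsum_indicator (S : Set α) : (Nat.card S : ℝ) = ∑' a, S.indicator 1 a := by
  rw [← tsum_subtype, Pi.one_def, tsum_const, nsmul_one]

lemma summable_indicator_one {S : Set α} (hS : S.Finite) : Summable (S.indicator (1 : α → ℝ)) :=
  summable_of_hasFiniteSupport (hS.subset (support_indicator_subset))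

lemma natCard_le_tsum {S : Set α} (hS : S.Finite) {f : α → ℝ} (hf : Summable f)
    (h : ∀ a, S.indicator 1 a ≤ f a) : (Nat.card S : ℝ) ≤ ∑' a, f a := by
  rw [natCard_eq_tsum_indicator]
  exact (summable_indicator_one hS).tsum_le_tsum h hf

lemma tsum_le_natCard {S : Set α} (hS : S.Finite) {f : α → ℝ} (hf : Summable f)
    (h : ∀ a, f a ≤ S.indicator 1 a) : ∑' a, f a ≤ Nat.card S := by
  rw [natCard_eq_tsum_indicator]
  exact hf.tsum_le_tsum h (summable_indicator_one hS)

lemma finite_setOf_le_of_tendsto {lam : ℕ → ℝ} (htop : Tendsto lam atTop atTop) (Λ : ℝ) :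
    {n | lam n ≤ Λ}.Finite := by
  have h : ∀ᶠ n in cofinite, Λ < lam n := Nat.cofinite_eq_atTop ▸ htop.eventually_gt_atTop Λ
  simpa only [not_lt] using eventually_cofinite.1 h

lemma indicator_setOf_le_inv {lam : ℕ → ℝ} {t : ℝ} (ht : 0 < t) (n : ℕ) :
    {n | lam n ≤ t⁻¹}.indicator 1 n = (Iic 1).indicator (1 : ℝ → ℝ) (t * lam n) := by
  simp [indicator_apply, ← le_inv_mul_iff₀ ht]

end Counting

/-- `(C / Γ(s)) ∫₀^∞ (1_{x ≤ 1 + δ} + δ e^{-x}) x^{s-1} dx`, the limit bound given by the upper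
(`δ > 0`) or lower (`δ < 0`) polynomial approximant of `1_{x ≤ 1}`. -/
noncomputable def karamataBound (s C δ : ℝ) : ℝ := C / Gamma s * ((1 + δ) ^ s / s + δ * Gamma s)

lemma tendsto_karamataBound {s : ℝ} (hs : 0 < s) (C : ℝ) :
    Tendsto (karamataBound s C) (𝓝 0) (𝓝 (C / Gamma (s + 1))) := by
  have hcont : ContinuousAt (karamataBound s C) 0 := by
    unfold karamataBound
    fun_prop (disch := norm_num)
  convert hcont.tendsto using 2
  rw [karamataBound, Gamma_add_one hs.ne', add_zero, one_rpow, zero_mul, add_zero]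
  field_simp

section Bounds

variable {lam : ℕ → ℝ} {s C : ℝ}

lemma eventually_rpow_mul_natCard_lt (hpos : ∀ n, 0 < lam n) (htop : Tendsto lam atTop atTop)
    (hsum : ∀ t : ℝ, 0 < t → Summable fun n => exp (-t * lam n)) (hs : 0 < s)
    (hheat : Tendsto (fun t : ℝ => t ^ s * ∑' n, exp (-t * lam n)) (𝓝[>] 0) (𝓝 C))
    (hC : 0 ≤ C) {M : ℝ} (hM : C / Gamma (s + 1) < M) :
    ∀ᶠ t in 𝓝[>] 0, t ^ s * (Nat.card {n | lam n ≤ t⁻¹} : ℝ) < M := by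
  obtain ⟨δ, hδM, hδ⟩ := (((tendsto_karamataBound hs C).eventually (gt_mem_nhds hM)).filter_mono
    nhdsWithin_le_nhds |>.and (self_mem_nhdsWithin (s := Ioi 0))).exists
  obtain ⟨P, hP⟩ := exists_polynomial_upper_approx_indicator (b := 1) (a := 1 + δ)
    (by linarith) hδ
  have hI : ∫ x in Ioi 0, exp (-x) * P.eval (exp (-x)) * x ^ (s - 1) ≤
      (1 + δ) ^ s / s + δ * Gamma s := by
    rw [← integral_indicator_Iic_add_mul_exp hs (by linarith) δ]
    exact setIntegral_mono_on (integrableOn_exp_neg_mul_eval hs P)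
      (integrableOn_indicator_Iic_add_mul_exp hs _ _) measurableSet_Ioi fun x hx =>
        mul_le_mul_of_nonneg_right (hP x (le_of_lt hx)).2 (rpow_nonneg (le_of_lt hx) _)
  have hlim : C / Gamma s * ∫ x in Ioi 0, exp (-x) * P.eval (exp (-x)) * x ^ (s - 1) < M :=
    (mul_le_mul_of_nonneg_left hI (div_nonneg hC (Gamma_pos_of_pos hs).le)).trans_lt hδM
  filter_upwards [(tendsto_rpow_mul_tsum_exp_neg_mul_eval hs hsum hheat P).eventually
    (gt_mem_nhds hlim), self_mem_nhdsWithin] with t hlt ht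
  refine lt_of_le_of_lt (mul_le_mul_of_nonneg_left ?_ (rpow_nonneg (le_of_lt ht) _)) hlt
  refine natCard_le_tsum (finite_setOf_le_of_tendsto htop _)
    (summable_exp_neg_mul_eval hsum P ht) fun n => ?_
  rw [indicator_setOf_le_inv ht, neg_mul]
  exact (hP _ (mul_pos ht (hpos n)).le).1

lemma eventually_lt_rpow_mul_natCard (hpos : ∀ n, 0 < lam n) (htop : Tendsto lam atTop atTop)
    (hsum : ∀ t : ℝ, 0 < t → Summable fun n => exp (-t * lam n)) (hs : 0 < s)
    (hheat : Tendsto (fun t : ℝ => t ^ s * ∑' n, exp (-t * lam n)) (𝓝[>] 0) (𝓝 C))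
    (hC : 0 ≤ C) {M : ℝ} (hM : M < C / Gamma (s + 1)) :
    ∀ᶠ t in 𝓝[>] 0, M < t ^ s * (Nat.card {n | lam n ≤ t⁻¹} : ℝ) := by
  obtain ⟨δ, hδM, hδ⟩ := (((tendsto_karamataBound hs C).eventually (lt_mem_nhds hM)).filter_mono
    nhdsWithin_le_nhds |>.and (Ioo_mem_nhdsLT (show (-1 : ℝ) < 0 by norm_num))).exists
  obtain ⟨P, hP⟩ := exists_polynomial_lower_approx_indicator (b := 1 + δ) (a := 1)
    (by linarith [hδ.2]) hδ.2
  have hI : (1 + δ) ^ s / s + δ * Gamma s ≤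
      ∫ x in Ioi 0, exp (-x) * P.eval (exp (-x)) * x ^ (s - 1) := by
    rw [← integral_indicator_Iic_add_mul_exp hs (by linarith [hδ.1]) δ]
    exact setIntegral_mono_on (integrableOn_indicator_Iic_add_mul_exp hs _ _)
      (integrableOn_exp_neg_mul_eval hs P) measurableSet_Ioi fun x hx =>
        mul_le_mul_of_nonneg_right (hP x (le_of_lt hx)).1 (rpow_nonneg (le_of_lt hx) _)
  have hlim : M < C / Gamma s * ∫ x in Ioi 0, exp (-x) * P.eval (exp (-x)) * x ^ (s - 1) :=
    hδM.trans_le (mul_le_mul_of_nonneg_left hI (div_nonneg hC (Gamma_pos_of_pos hs).le))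
  filter_upwards [(tendsto_rpow_mul_tsum_exp_neg_mul_eval hs hsum hheat P).eventually
    (lt_mem_nhds hlim), self_mem_nhdsWithin] with t hlt ht
  refine hlt.trans_le (mul_le_mul_of_nonneg_left ?_ (rpow_nonneg (le_of_lt ht) _))
  refine tsum_le_natCard (finite_setOf_le_of_tendsto htop _)
    (summable_exp_neg_mul_eval hsum P ht) fun n => ?_
  rw [indicator_setOf_le_inv ht, neg_mul]
  exact (hP _ (mul_pos ht (hpos n)).le).2

theorem tendsto_rpow_mul_natCard (hpos : ∀ n, 0 < lam n) (htop : Tendsto lam atTop atTop)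
    (hsum : ∀ t : ℝ, 0 < t → Summable fun n => exp (-t * lam n)) (hs : 0 < s)
    (hheat : Tendsto (fun t : ℝ => t ^ s * ∑' n, exp (-t * lam n)) (𝓝[>] 0) (𝓝 C)) :
    Tendsto (fun t : ℝ => t ^ s * (Nat.card {n | lam n ≤ t⁻¹} : ℝ)) (𝓝[>] 0)
      (𝓝 (C / Gamma (s + 1))) := by
  have hC : 0 ≤ C := ge_of_tendsto hheat (eventually_mem_nhdsWithin.mono fun t ht =>
    mul_nonneg (rpow_nonneg (le_of_lt ht) _) (tsum_nonneg fun n => (exp_pos _).le))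
  exact tendsto_order.2 ⟨fun M hM => eventually_lt_rpow_mul_natCard hpos htop hsum hs hheat hC hM,
    fun M hM => eventually_rpow_mul_natCard_lt hpos htop hsum hs hheat hC hM⟩

end Bounds

end KaramataWeyl

open KaramataWeyl in
theorem karamata_weyl_law_general (lam : ℕ → ℝ)
    (hpos : ∀ n, 0 < lam n) (htop : Tendsto lam atTop atTop)
    (hsum : ∀ t : ℝ, 0 < t → Summable fun n => exp (-t * lam n))
    (C m : ℝ) (hm : 0 < m)
    (hheat : Tendsto (fun t : ℝ => t ^ (m / 2) * ∑' n, exp (-t * lam n))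
      (nhdsWithin 0 (Set.Ioi 0)) (nhds C)) :
    Tendsto (fun Λ : ℝ => (Nat.card {n | lam n ≤ Λ} : ℝ) / Λ ^ (m / 2))
      atTop (nhds (C / Real.Gamma (m / 2 + 1))) := by
  refine ((tendsto_rpow_mul_natCard hpos htop hsum (half_pos hm) hheat).comp
    tendsto_inv_atTop_nhdsGT_zero).congr' ?_
  filter_upwards [eventually_gt_atTop 0] with Λ hΛ
  rw [Function.comp_apply, inv_inv, inv_rpow hΛ.le, inv_mul_eq_div]

/-- Karamata-type Tauberian theorem yielding Weyl's law: if `(λ_n)` is a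
nondecreasing sequence of positive reals tending to infinity whose heat trace
`Σ_n e^{−tλ_n}` converges for all `t > 0` and satisfies
`t^{m/2} Σ_n e^{−tλ_n} → C` as `t → 0⁺` (with `C > 0`, `m > 0`), then the
counting function `N(Λ) = #{n : λ_n ≤ Λ}` satisfies
`N(Λ)/Λ^{m/2} → C/Γ(m/2 + 1)` as `Λ → ∞`. -/
theorem karamata_weyl_law (lam : ℕ → ℝ) (hmono : Monotone lam)
    (hpos : ∀ n, 0 < lam n) (htop : Tendsto lam atTop atTop)
    (hsum : ∀ t : ℝ, 0 < t → Summable fun n => exp (-t * lam n))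
    (C m : ℝ) (hC : 0 < C) (hm : 0 < m)
    (hheat : Tendsto (fun t : ℝ => t ^ (m / 2) * ∑' n, exp (-t * lam n))
      (nhdsWithin 0 (Set.Ioi 0)) (nhds C)) :
    Tendsto (fun Λ : ℝ => (Nat.card {n | lam n ≤ Λ} : ℝ) / Λ ^ (m / 2))
      atTop (nhds (C / Real.Gamma (m / 2 + 1))) :=
  karamata_weyl_law_general lam hpos htop hsum C m hm hheat
end
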